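/- For all φ, χ ∈ S(ℝⁿ) and all (x, y) ∈ ℝ²ⁿ, one has (πi)^{-n} ∫_{ℝ²ⁿ} e^{i W_B(x,y;x',y')} φ(x') χ(y') dx' dy' = (2π)^{n/2} i^{-n} · W(φ, conj(χ̂))(x, y), where W_B(x,y;x',y') = −2(y·x' + x·y') + x'·y' + 2 x·y, χ̂ is the Fourier transform of χ, and conj denotes complex conjugation. (This identifies the intertwining operator for Bopp pseudo-differential operators with the cross-Wigner transform.) -/

import Mathlib

open MeasureTheory Complex
open scoped ComplexConjugate Real

noncomputable section

/-- Euclidean dot product on `ℝⁿ`. -/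
def dotR {n : ℕ} (a b : Fin n → ℝ) : ℝ := ∑ i, a i * b i

/-- The cross-Wigner transform on `ℝⁿ`:
`W(φ,ψ)(x,ξ) = (2π)^{-n} ∫ e^{-iξ·t} φ(x+t/2) conj(ψ(x−t/2)) dt`. -/
def crossWignerN {n : ℕ} (φ ψ : (Fin n → ℝ) → ℂ) (x ξ : Fin n → ℝ) : ℂ :=
  ((((2 * π) ^ n)⁻¹ : ℝ) : ℂ) *
    ∫ t : Fin n → ℝ, Complex.exp (-(Complex.I * (dotR ξ t : ℝ))) *
      φ (x + (2⁻¹ : ℝ) • t) * conj (ψ (x - (2⁻¹ : ℝ) • t))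

/-- The Fourier transform `χ̂(ξ) = (2π)^{-n/2} ∫ e^{-iξ·t} χ(t) dt` on `ℝⁿ`. -/
def fourierN {n : ℕ} (χ : (Fin n → ℝ) → ℂ) (ξ : Fin n → ℝ) : ℂ :=
  (((Real.sqrt ((2 * π) ^ n))⁻¹ : ℝ) : ℂ) *
    ∫ t : Fin n → ℝ, Complex.exp (-(Complex.I * (dotR ξ t : ℝ))) * χ t

/-- The generating quadratic form for the Bopp intertwiner:
`W_B(x,y;x',y') = −2(y·x' + x·y') + x'·y' + 2x·y`. -/
def WBopp {n : ℕ} (x y x' y' : Fin n → ℝ) : ℝ :=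
  -2 * (dotR y x' + dotR x y') + dotR x' y' + 2 * dotR x y

/-! Substituting `x' = x + t/2`, the phase splits as `W_B = -y·t - (x - t/2)·y'`, so the
`y'`-integral is `(2π)^{n/2} e^{-iy·t} φ(x + t/2) χ̂(x - t/2)` (Fubini applies since the kernel
has modulus one). The Jacobian `2ⁿ` of `x' ↦ t` combines with `(πi)^{-n}` and the factor
`(2π)^{-n}` of the Wigner transform into `i^{-n}`. -/

lemma WBopp_add_half_smul {n : ℕ} (x y t y' : Fin n → ℝ) :
    WBopp x y (x + (2⁻¹ : ℝ) • t) y' = -dotR y t - dotR (x - (2⁻¹ : ℝ) • t) y' := by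
  simp only [WBopp, dotR, Finset.mul_sum, ← Finset.sum_add_distrib, ← Finset.sum_neg_distrib,
    ← Finset.sum_sub_distrib]
  refine Finset.sum_congr rfl fun i _ => ?_
  simp only [Pi.add_apply, Pi.sub_apply, Pi.smul_apply, smul_eq_mul]
  ring

lemma continuous_WBopp {n : ℕ} (x y : Fin n → ℝ) :
    Continuous fun p : (Fin n → ℝ) × (Fin n → ℝ) => WBopp x y p.1 p.2 := by
  unfold WBopp dotR
  fun_prop

lemma integral_exp_dotR_mul_eq_fourierN {n : ℕ} (χ : (Fin n → ℝ) → ℂ) (ξ : Fin n → ℝ) :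
    ∫ t, Complex.exp (-(Complex.I * (dotR ξ t : ℝ))) * χ t
      = (Real.sqrt ((2 * π) ^ n) : ℂ) * fourierN χ ξ := by
  have hS : (Real.sqrt ((2 * π) ^ n) : ℂ) ≠ 0 := by
    exact_mod_cast (Real.sqrt_pos.2 (by positivity)).ne'
  rw [fourierN, Complex.ofReal_inv, mul_inv_cancel_left₀ hS]

lemma integral_comp_add_inv_smul {E F : Type*} [NormedAddCommGroup E] [NormedSpace ℝ E]
    [MeasurableSpace E] [BorelSpace E] [FiniteDimensional ℝ E] (μ : Measure E)
    [μ.IsAddHaarMeasure] [NormedAddCommGroup F] [NormedSpace ℝ F] (f : E → F) (a : E)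
    {R : ℝ} (hR : 0 ≤ R) :
    ∫ t, f (a + R⁻¹ • t) ∂μ = R ^ Module.finrank ℝ E • ∫ u, f u ∂μ := by
  rw [Measure.integral_comp_inv_smul_of_nonneg μ (fun u => f (a + u)) hR,
    integral_add_left_eq_self]

lemma integrable_exp_mul_mul_prod {α β : Type*} [MeasurableSpace α] [MeasurableSpace β]
    {μ : Measure α} {ν : Measure β} [SFinite ν] {θ : α × β → ℝ} (hθ : Measurable θ)
    {f : α → ℂ} {g : β → ℂ} (hf : Integrable f μ) (hg : Integrable g ν) :
    Integrable (fun p => Complex.exp (Complex.I * (θ p : ℝ)) * f p.1 * g p.2) (μ.prod ν) := by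
  simp_rw [mul_assoc]
  refine (hf.mul_prod hg).bdd_mul (c := 1) (by fun_prop) (Filter.Eventually.of_forall fun p => ?_)
  exact (Complex.norm_exp_I_mul_ofReal _).le

lemma integral_exp_WBopp_mul_eq_fourierN {n : ℕ} (φ χ : (Fin n → ℝ) → ℂ) (x y t : Fin n → ℝ) :
    ∫ y', Complex.exp (Complex.I * (WBopp x y (x + (2⁻¹ : ℝ) • t) y' : ℝ)) *
        φ (x + (2⁻¹ : ℝ) • t) * χ y'
      = (Real.sqrt ((2 * π) ^ n) : ℂ) * (Complex.exp (-(Complex.I * (dotR y t : ℝ))) *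
        φ (x + (2⁻¹ : ℝ) • t) * fourierN χ (x - (2⁻¹ : ℝ) • t)) := by
  have hsplit : ∀ y', Complex.exp (Complex.I * (WBopp x y (x + (2⁻¹ : ℝ) • t) y' : ℝ)) *
        φ (x + (2⁻¹ : ℝ) • t) * χ y'
      = Complex.exp (-(Complex.I * (dotR y t : ℝ))) * φ (x + (2⁻¹ : ℝ) • t) *
        (Complex.exp (-(Complex.I * (dotR (x - (2⁻¹ : ℝ) • t) y' : ℝ))) * χ y') := by
    intro y'
    rw [WBopp_add_half_smul, Complex.ofReal_sub, mul_sub, sub_eq_add_neg, Complex.exp_add,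
      Complex.ofReal_neg, mul_neg]
    ring
  simp_rw [hsplit, integral_const_mul, integral_exp_dotR_mul_eq_fourierN]
  ring

theorem stmt17_general (n : ℕ) (φ χ : SchwartzMap (Fin n → ℝ) ℂ)
    (x y : Fin n → ℝ) :
    (((π : ℂ) * Complex.I) ^ n)⁻¹ *
        ∫ p : (Fin n → ℝ) × (Fin n → ℝ),
          Complex.exp (Complex.I * (WBopp x y p.1 p.2 : ℝ)) * φ p.1 * χ p.2
      = ((Real.sqrt ((2 * π) ^ n) : ℝ) : ℂ) * (Complex.I ^ n)⁻¹ *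
          crossWignerN φ (fun t => conj (fourierN χ t)) x y := by
  set K : (Fin n → ℝ) → ℂ := fun x' =>
    ∫ y', Complex.exp (Complex.I * (WBopp x y x' y' : ℝ)) * φ x' * χ y' with hK
  set J := ∫ t, Complex.exp (-(Complex.I * (dotR y t : ℝ))) * φ (x + (2⁻¹ : ℝ) • t) *
    fourierN χ (x - (2⁻¹ : ℝ) • t)
  have hFubini : ∫ p : (Fin n → ℝ) × (Fin n → ℝ),
      Complex.exp (Complex.I * (WBopp x y p.1 p.2 : ℝ)) * φ p.1 * χ p.2 = ∫ x', K x' := by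
    rw [Measure.volume_eq_prod,
      integral_prod _ (integrable_exp_mul_mul_prod
        (continuous_WBopp x y).measurable φ.integrable χ.integrable)]
  have hSubst : (Real.sqrt ((2 * π) ^ n) : ℂ) * J = 2 ^ n * ∫ x', K x' := by
    have h := integral_comp_add_inv_smul volume K x zero_le_two
    simp_rw [hK, integral_exp_WBopp_mul_eq_fourierN, integral_const_mul, ← hK] at h
    simpa using h
  have hWigner :
      crossWignerN φ (fun t => conj (fourierN χ t)) x y = ((2 * π : ℂ) ^ n)⁻¹ * J := by
    simp only [crossWignerN, Complex.conj_conj]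
    push_cast
    rfl
  have hπ : (π : ℂ) ≠ 0 := Complex.ofReal_ne_zero.2 Real.pi_ne_zero
  rw [hFubini, hWigner]
  field_simp
  linear_combination (-((π : ℂ) * Complex.I) ^ n) * hSubst

/-- For all Schwartz functions `φ, χ` on `ℝⁿ` and `(x,y) ∈ ℝ²ⁿ`,
`(πi)^{-n} ∬ e^{iW_B(x,y;x',y')} φ(x')χ(y') dx'dy' = (2π)^{n/2} i^{-n} W(φ, conj χ̂)(x,y)`:
the intertwining operator for Bopp pseudo-differential operators is the cross-Wigner
transform. -/
theorem stmt17 (n : ℕ) (hn : 0 < n) (φ χ : SchwartzMap (Fin n → ℝ) ℂ)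
    (x y : Fin n → ℝ) :
    (((π : ℂ) * Complex.I) ^ n)⁻¹ *
        ∫ p : (Fin n → ℝ) × (Fin n → ℝ),
          Complex.exp (Complex.I * (WBopp x y p.1 p.2 : ℝ)) * φ p.1 * χ p.2
      = ((Real.sqrt ((2 * π) ^ n) : ℝ) : ℂ) * (Complex.I ^ n)⁻¹ *
          crossWignerN φ (fun t => conj (fourierN χ t)) x y :=
  stmt17_general n φ χ x y
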